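/- Let y ∈ ℝ^{n+1} and k ∈ ℤ^{n+1}, and suppose x = Q k is a closest point in A_n* to y. Then there exists λ ∈ ℝ such that k is a closest point in ℤ^{n+1} to y + λ·1, i.e., ‖y + λ·1 − k‖ ≤ ‖y + λ·1 − k'‖ for every k' ∈ ℤ^{n+1}. (Indeed λ = (Σ_j (k_j − y_j))/(n+1) works.) -/

import Mathlib

/-!
Every `v` splits orthogonally as `Q v + m • 1` with `m` the mean of `v`, so
`‖v + c • 1‖² = ‖Q v‖² + (n+1) (c + m)²`. Hence `‖y - Q k'‖²` and `‖y + λ • 1 - k'‖²` both equal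
`‖Q (y - k')‖²` plus a second term: in the first case it does not depend on `k'`, in the second
it vanishes at `k' = k` for `λ = mean (k - y)` and is nonnegative otherwise. So the minimality of
`Q k` among the `Q k'` transfers to the minimality of `k`.
-/

/-- The orthogonal projection onto the hyperplane orthogonal to the all-ones
vector: `(Q x) i = x i - (∑ j, x j) / (n+1)`. -/
noncomputable def Q {n : ℕ} (x : EuclideanSpace ℝ (Fin (n+1))) :
    EuclideanSpace ℝ (Fin (n+1)) :=
  WithLp.toLp 2 (fun i => x i - (∑ j, x j) / (n+1))

/-- An integer vector viewed as a point of `ℝ^{n+1}`. -/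
def intVec {n : ℕ} (k : Fin (n+1) → ℤ) : EuclideanSpace ℝ (Fin (n+1)) :=
  WithLp.toLp 2 (fun i => (k i : ℝ))

/-- The all-ones vector in `ℝ^{n+1}`. -/
def ones {n : ℕ} : EuclideanSpace ℝ (Fin (n+1)) := WithLp.toLp 2 (fun _ => 1)

/-- The lattice `A_n*`: the image under `Q` of the integer vectors in `ℝ^{n+1}`. -/
noncomputable def Anstar (n : ℕ) : Set (EuclideanSpace ℝ (Fin (n+1))) :=
  { x | ∃ k : Fin (n+1) → ℤ, x = Q (WithLp.toLp 2 (fun i => (k i : ℝ))) }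

section

variable {n : ℕ}

lemma sum_Q (x : EuclideanSpace ℝ (Fin (n+1))) : ∑ i, Q x i = 0 := by
  simp only [Q, PiLp.toLp_apply, Finset.sum_sub_distrib, Finset.sum_const, Finset.card_univ,
    Fintype.card_fin, nsmul_eq_mul]
  push_cast
  field_simp
  ring

lemma inner_Q_ones (x : EuclideanSpace ℝ (Fin (n+1))) : inner ℝ (Q x) ones = 0 := by
  simp [PiLp.inner_apply, ones, sum_Q]

lemma norm_ones_sq : ‖(ones : EuclideanSpace ℝ (Fin (n+1)))‖ ^ 2 = n + 1 := by
  simp [EuclideanSpace.norm_sq_eq, ones]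

lemma Q_add_mean_smul_ones (x : EuclideanSpace ℝ (Fin (n+1))) :
    Q x + ((∑ j, x j) / (n+1)) • ones = x := by
  ext i
  simp [Q, ones]

lemma norm_add_smul_ones_sq (x : EuclideanSpace ℝ (Fin (n+1))) (c : ℝ) :
    ‖x + c • ones‖ ^ 2 = ‖Q x‖ ^ 2 + (n+1) * (c + (∑ j, x j) / (n+1)) ^ 2 := by
  have hx : x + c • ones = Q x + (c + (∑ j, x j) / (n+1)) • ones := by
    conv_lhs => rw [← Q_add_mean_smul_ones x]
    module
  have horth : inner ℝ (Q x) ((c + (∑ j, x j) / (n+1)) • ones) = 0 := by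
    rw [real_inner_smul_right, inner_Q_ones, mul_zero]
  rw [hx, sq, sq, norm_add_sq_eq_norm_sq_add_norm_sq_real horth, norm_smul, mul_mul_mul_comm,
    ← sq ‖ones‖, norm_ones_sq, Real.norm_eq_abs, ← sq, ← sq, sq_abs]
  ring

lemma norm_sub_Q_sq (y x : EuclideanSpace ℝ (Fin (n+1))) :
    ‖y - Q x‖ ^ 2 = ‖Q (y - x)‖ ^ 2 + (∑ j, y j) ^ 2 / (n+1) := by
  rw [eq_sub_of_add_eq (Q_add_mean_smul_ones x), ← sub_add, norm_add_smul_ones_sq]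
  simp only [PiLp.sub_apply, Finset.sum_sub_distrib]
  field_simp
  ring

end

/-- If `x = Q k` is a closest point in `A_n*` to `y`, then there exists `λ ∈ ℝ`
such that `k` is a closest point in `ℤ^{n+1}` to `y + λ·1`. -/
theorem exists_lambda_closest_int (n : ℕ) (y : EuclideanSpace ℝ (Fin (n+1)))
    (k : Fin (n+1) → ℤ)
    (hclosest : ∀ w ∈ Anstar n, ‖y - Q (intVec k)‖ ≤ ‖y - w‖) :
    ∃ lam : ℝ, ∀ k' : Fin (n+1) → ℤ,
      ‖y + lam • ones - intVec k‖ ≤ ‖y + lam • ones - intVec k'‖ := by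
  refine ⟨-(∑ j, (y - intVec k) j) / (n+1), fun k' => ?_⟩
  have hQ : ‖Q (y - intVec k)‖ ^ 2 ≤ ‖Q (y - intVec k')‖ ^ 2 := by
    have h := hclosest (Q (intVec k')) ⟨k', rfl⟩
    rw [← sq_le_sq₀ (norm_nonneg _) (norm_nonneg _), norm_sub_Q_sq, norm_sub_Q_sq] at h
    linarith
  rw [← sq_le_sq₀ (norm_nonneg _) (norm_nonneg _), add_sub_right_comm, add_sub_right_comm,
    norm_add_smul_ones_sq, norm_add_smul_ones_sq, neg_div, neg_add_cancel, zero_pow two_ne_zero,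
    mul_zero, add_zero]
  exact hQ.trans (le_add_of_nonneg_right (by positivity))
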